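/- The module E = coker(φ_u) satisfies condition G_{d−1}: ht I_j(φ_u) ≥ n−u−j+1 for every integer j with n−u−d+2 ≤ j ≤ n−u−1. -/

import Mathlib

open MvPolynomial Matrix

/-- The ideal generated by all `j × j` minors of a matrix. -/
noncomputable def minorsIdeal {A : Type*} [CommRing A] {p q : ℕ}
    (M : Matrix (Fin p) (Fin q) A) (j : ℕ) : Ideal A :=
  Ideal.span { x | ∃ (r : Fin j → Fin p) (c : Fin j → Fin q),
    Function.Injective r ∧ Function.Injective c ∧ x = (M.submatrix r c).det }

/-- The height of an ideal: the infimum of the heights of the primes containing it. -/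
noncomputable def idealHeight {A : Type*} [CommRing A] (I : Ideal A) : ℕ∞ :=
  ⨅ (P : PrimeSpectrum A) (_ : I ≤ P.asIdeal), Order.height P

/-
A `(j + u)`-minor of `φ` has at most `u` columns among the first `u`; Laplace expansion along
those columns writes it as a combination of minors of `φ_u` of size at least `j`. Hence
`I_{j+u}(φ) ⊆ I_j(φ_u)`, and condition `G_{d-1}` for `φ` at size `j + u` is exactly the bound
required of `φ_u` at size `j`.
-/

lemma idealHeight_mono {A : Type*} [CommRing A] {I J : Ideal A} (h : I ≤ J) :
    idealHeight I ≤ idealHeight J :=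
  le_iInf₂ fun P hP => iInf₂_le P (h.trans hP)

section Minors

open Finset

variable {A : Type*} [CommRing A] {p q : ℕ} (M : Matrix (Fin p) (Fin q) A)

lemma det_submatrix_mem_minorsIdeal {t : ℕ} {r : Fin t → Fin p} {c : Fin t → Fin q}
    (hr : r.Injective) (hc : c.Injective) : (M.submatrix r c).det ∈ minorsIdeal M t :=
  Ideal.subset_span ⟨r, c, hr, hc, rfl⟩

lemma minorsIdeal_succ_le (t : ℕ) : minorsIdeal M (t + 1) ≤ minorsIdeal M t := by
  rw [minorsIdeal, Ideal.span_le]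
  rintro x ⟨r, c, hr, hc, rfl⟩
  rw [det_succ_column_zero]
  refine Ideal.sum_mem _ fun i _ => Ideal.mul_mem_left _ _ ?_
  rw [submatrix_submatrix]
  exact det_submatrix_mem_minorsIdeal M (hr.comp Fin.succAbove_right_injective)
    (hc.comp (Fin.succ_injective _))

lemma minorsIdeal_antitone : Antitone (minorsIdeal M) :=
  antitone_nat_of_succ_le (minorsIdeal_succ_le M)

lemma det_submatrix_mem_minorsIdeal_submatrix_id_of_forall_mem_range {q' : ℕ}
    (e : Fin q' → Fin q) {j t : ℕ} (hjt : j ≤ t) {r : Fin t → Fin p} {c : Fin t → Fin q}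
    (hr : r.Injective) (hc : c.Injective) (hce : ∀ i, c i ∈ Set.range e) :
    (M.submatrix r c).det ∈ minorsIdeal (M.submatrix id e) j := by
  choose c' hc' using hce
  have hc'_inj : c'.Injective := fun a b hab => hc (by rw [← hc' a, ← hc' b, hab])
  have hsub : M.submatrix r c = (M.submatrix id e).submatrix r c' := by
    ext a b; simp [hc']
  rw [hsub]
  exact minorsIdeal_antitone _ hjt (det_submatrix_mem_minorsIdeal _ hr hc'_inj)

lemma det_submatrix_mem_minorsIdeal_submatrix_id {q' : ℕ} (e : Fin q' → Fin q) (j t : ℕ)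
    {r : Fin t → Fin p} {c : Fin t → Fin q} (hr : r.Injective) (hc : c.Injective)
    (hcard : j + #{i | c i ∉ Set.range e} ≤ t) :
    (M.submatrix r c).det ∈ minorsIdeal (M.submatrix id e) j := by
  induction t with
  | zero =>
    exact det_submatrix_mem_minorsIdeal_submatrix_id_of_forall_mem_range M e (by omega) hr hc
      (fun i => i.elim0)
  | succ t ih =>
    by_cases hout : ∃ i₀, c i₀ ∉ Set.range e
    · obtain ⟨i₀, hi₀⟩ := hout
      have hcount :
          #{i | c i ∉ Set.range e} = #{x | (c ∘ i₀.succAbove) x ∉ Set.range e} + 1 := by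
        simp only [card_filter, Function.comp_apply, Fin.sum_univ_succAbove _ i₀, if_pos hi₀,
          add_comm]
      rw [det_succ_column _ i₀]
      refine Ideal.sum_mem _ fun i _ => Ideal.mul_mem_left _ _ ?_
      rw [submatrix_submatrix]
      exact ih (hr.comp Fin.succAbove_right_injective) (hc.comp Fin.succAbove_right_injective)
        (by omega)
    · push Not at hout
      exact det_submatrix_mem_minorsIdeal_submatrix_id_of_forall_mem_range M e (by omega) hr hc hout

lemma minorsIdeal_add_le_minorsIdeal_submatrix_id {q' : ℕ} {e : Fin q' → Fin q}
    (he : e.Injective) (j : ℕ) :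
    minorsIdeal M (j + (q - q')) ≤ minorsIdeal (M.submatrix id e) j := by
  rw [minorsIdeal, Ideal.span_le]
  rintro x ⟨r, c, hr, hc, rfl⟩
  refine det_submatrix_mem_minorsIdeal_submatrix_id M e j _ hr hc ?_
  have hout : #{i | c i ∉ Set.range e} ≤ #(univ.image e)ᶜ :=
    card_le_card_of_injOn c (fun i hi => by simpa using hi) hc.injOn
  simp only [card_compl, card_image_of_injective _ he, card_univ, Fintype.card_fin] at hout
  omega

end Minors

theorem stmt_14
    (k : Type*) [Field k] (d m : ℕ)
    (φ : Matrix (Fin (m + 1)) (Fin m) (MvPolynomial (Fin d) k))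
    (hG : ∀ j : ℕ, m + 1 - d + 2 ≤ j → j ≤ m →
      ((m + 1 - j + 1 : ℕ) : ℕ∞) ≤ idealHeight (minorsIdeal φ j))
    (u : ℕ) (hu2 : u ≤ m + 1 - d)
    (φu : Matrix (Fin (m + 1)) (Fin (m - u)) (MvPolynomial (Fin d) k))
    (hφu : ∀ (i : Fin (m + 1)) (j : Fin (m - u)), φu i j = φ i ⟨u + (j : ℕ), by omega⟩)
    :
    ∀ j : ℕ, m + 1 - u - d + 2 ≤ j → j ≤ m - u →
      ((m + 1 - u - j + 1 : ℕ) : ℕ∞) ≤ idealHeight (minorsIdeal φu j) := by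
  intro j hj₁ hj₂
  let e : Fin (m - u) → Fin m := fun b => ⟨u + b, by omega⟩
  have he : e.Injective := fun a b hab => Fin.ext (by simpa [e] using hab)
  have hφu_eq : φu = φ.submatrix id e := Matrix.ext hφu
  have hsize : j + (m - (m - u)) = j + u := by omega
  calc ((m + 1 - u - j + 1 : ℕ) : ℕ∞)
      = ((m + 1 - (j + u) + 1 : ℕ) : ℕ∞) := by congr 1; omega
    _ ≤ idealHeight (minorsIdeal φ (j + u)) := hG (j + u) (by omega) (by omega)
    _ ≤ idealHeight (minorsIdeal φu j) := by
      rw [hφu_eq, ← hsize]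
      exact idealHeight_mono (minorsIdeal_add_le_minorsIdeal_submatrix_id φ he j)
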